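/- In a system (S, (L_x), (Ω_{x,y})) satisfying the minimal axioms, if x ξ x′ and x ≤ y in S, then (x ∨ y) ξ (x′ ∨ y). -/

import Mathlib

/-- A partial bijection from `A` to `B`, modeled as a functional and injective
relation `R : A → B → Prop`.  Its domain is `rdom R` and its image is `rim R`. -/
def IsPartialBij {A : Type u} {B : Type v} (R : A → B → Prop) : Prop :=
  (∀ a b b', R a b → R a b' → b = b') ∧ (∀ a a' b, R a b → R a' b → a = a')

/-- The domain of a partial bijection (as a relation). -/
def rdom {A : Type u} {B : Type v} (R : A → B → Prop) : Set A := {a | ∃ b, R a b}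

/-- The image of a partial bijection (as a relation). -/
def rim {A : Type u} {B : Type v} (R : A → B → Prop) : Set B := {b | ∃ a, R a b}

/-- A (nonempty) filter of a lattice: an up-set closed under meets. -/
def IsLatFilter {A : Type u} [Lattice A] (F : Set A) : Prop :=
  F.Nonempty ∧ (∀ a ∈ F, ∀ b, a ≤ b → b ∈ F) ∧ (∀ a ∈ F, ∀ b ∈ F, a ⊓ b ∈ F)

/-- A (nonempty) ideal of a lattice: a down-set closed under joins. -/
def IsLatIdeal {A : Type u} [Lattice A] (I : Set A) : Prop :=
  I.Nonempty ∧ (∀ a ∈ I, ∀ b, b ≤ a → b ∈ I) ∧ (∀ a ∈ I, ∀ b ∈ I, a ⊔ b ∈ I)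

/-- A relation between lattices preserves joins and meets; together with
`IsPartialBij` this says the relation is a lattice isomorphism from its
domain onto its image. -/
def IsLatHomRel {A : Type u} {B : Type v} [Lattice A] [Lattice B]
    (R : A → B → Prop) : Prop :=
  (∀ a a' b b', R a b → R a' b' → R (a ⊔ a') (b ⊔ b')) ∧
  (∀ a a' b b', R a b → R a' b' → R (a ⊓ a') (b ⊓ b'))

/-- `ChainComp L Ω a b f` says there is a saturated chain
`a = x₀ ⋖ x₁ ⋖ ⋯ ⋖ xₙ = b` in `S` such that `f` is the composite
`Ω_{x_{n-1},x_n} ∘ ⋯ ∘ Ω_{x_0,x_1}` (the identity relation when `a = b`). -/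
inductive ChainComp {S : Type u} [Lattice S] (L : S → Type v)
    (Ω : ∀ x y : S, x ⋖ y → L x → L y → Prop) : ∀ a b : S, (L a → L b → Prop) → Prop
  | refl (a : S) : ChainComp L Ω a a (fun u v => u = v)
  | cons {a b c : S} (h : a ⋖ b) {f : L b → L c → Prop}
      (hf : ChainComp L Ω b c f) : ChainComp L Ω a c (Relation.Comp (Ω a b h) f)

/-- The minimal axioms for a polytone system `(S, (L x), Ω)`:
(PS1⁻) `S` is l.f.f.c.; (PS2⁻) the blocks are finite, modular, complemented;
(PS3⁻) each connection `Ω x y h` (for a cover `x ⋖ y`) is a partial bijection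
whose domain is a filter, whose image is an ideal, and which is a lattice
isomorphism; (PS6⁻∧), (PS7⁻∧), (PS8⁻∨) as in the paper. -/
def MinimalAxioms {S : Type u} [Lattice S] (L : S → Type v)
    [∀ x, Lattice (L x)] [∀ x, BoundedOrder (L x)]
    (Ω : ∀ x y : S, x ⋖ y → L x → L y → Prop) : Prop :=
  -- (PS1⁻) S is l.f.f.c.
  (∀ a b : S, (Set.Icc a b).Finite) ∧
  (∀ a : S, {b | a ⋖ b}.Finite) ∧
  (∀ a : S, {b | b ⋖ a}.Finite) ∧
  -- (PS2⁻) blocks are f.m.c.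
  (∀ x, Finite (L x)) ∧
  (∀ x, IsModularLattice (L x)) ∧
  (∀ x, ComplementedLattice (L x)) ∧
  -- (PS3⁻)
  (∀ x y : S, ∀ h : x ⋖ y, IsPartialBij (Ω x y h) ∧ IsLatFilter (rdom (Ω x y h)) ∧
    IsLatIdeal (rim (Ω x y h)) ∧ IsLatHomRel (Ω x y h)) ∧
  -- (PS6⁻∧)
  (∀ x y : S, ∀ (hx : x ⊓ y ⋖ x) (hy : x ⊓ y ⋖ y),
    ∃ (f : L x → L (x ⊔ y) → Prop) (g : L y → L (x ⊔ y) → Prop),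
      ChainComp L Ω x (x ⊔ y) f ∧ ChainComp L Ω y (x ⊔ y) g ∧
      Relation.Comp (Ω (x ⊓ y) x hx) f = Relation.Comp (Ω (x ⊓ y) y hy) g) ∧
  -- (PS7⁻∧)
  (∀ x y : S, ∀ (hx : x ⊓ y ⋖ x) (hy : x ⊓ y ⋖ y),
    ∃ h : L (x ⊓ y) → L (x ⊔ y) → Prop, ChainComp L Ω (x ⊓ y) (x ⊔ y) h ∧
      rdom (Ω (x ⊓ y) x hx) ∩ rdom (Ω (x ⊓ y) y hy) ⊆ rdom h) ∧
  -- (PS8⁻∨)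
  (∀ x y : S, ∀ (hx : x ⋖ x ⊔ y) (hy : y ⋖ x ⊔ y),
    ∃ h : L (x ⊓ y) → L (x ⊔ y) → Prop, ChainComp L Ω (x ⊓ y) (x ⊔ y) h ∧
      rim (Ω x (x ⊔ y) hx) ∩ rim (Ω y (x ⊔ y) hy) ⊆ rim h)

/-- The ordered relation ξ on `S`: `x ξ y` iff `x ≤ y` and `Φ x y` is not empty. -/
def xiRel {S : Type u} [Lattice S] {L : S → Type v}
    (Φ : ∀ x y : S, x ≤ y → (L x → L y → Prop)) (x y : S) : Prop :=
  ∃ h : x ≤ y, ∃ u v, Φ x y h u v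

section PolytoneAux

set_option linter.unusedSectionVars false

universe u₁ v₁

variable {S : Type u₁} [Lattice S] {L : S → Type v₁}
  [∀ x, Lattice (L x)] [∀ x, BoundedOrder (L x)]
  {Ω : ∀ x y : S, x ⋖ y → L x → L y → Prop}

lemma comp_eq_id_left {α : Type*} {β : Type*} (r : α → β → Prop) :
    Relation.Comp (fun u v => u = v) r = r := by
  funext a b; apply propext
  constructor
  · rintro ⟨c, rfl, h⟩; exact h
  · intro h; exact ⟨a, rfl, h⟩

lemma comp_eq_id_right {α : Type*} {β : Type*} (r : α → β → Prop) :
    Relation.Comp r (fun u v => u = v) = r := by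
  funext a b; apply propext
  constructor
  · rintro ⟨c, h, rfl⟩; exact h
  · intro h; exact ⟨b, h, rfl⟩

lemma mem_rdom_comp {α β γ : Type*} {R : α → β → Prop} {T : β → γ → Prop} {u : α} :
    u ∈ rdom (Relation.Comp R T) ↔ ∃ v, R u v ∧ v ∈ rdom T := by
  constructor
  · rintro ⟨w, v, h1, h2⟩; exact ⟨v, h1, w, h2⟩
  · rintro ⟨v, h1, w, h2⟩; exact ⟨w, v, h1, h2⟩

lemma chain_le {a b : S} {f : L a → L b → Prop} (h : ChainComp L Ω a b f) : a ≤ b := by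
  induction h with
  | refl a => exact le_rfl
  | cons h hf ih => exact h.le.trans ih

lemma chain_trans {a m b : S} {f : L a → L m → Prop} {g : L m → L b → Prop}
    (hf : ChainComp L Ω a m f) (hg : ChainComp L Ω m b g) :
    ChainComp L Ω a b (Relation.Comp f g) := by
  induction hf with
  | refl a => rw [comp_eq_id_left]; exact hg
  | cons h hf ih => rw [Relation.comp_assoc]; exact ChainComp.cons h (ih hg)

lemma chain_self {a b : S} {f : L a → L b → Prop} (hf : ChainComp L Ω a b f) :
    ∀ _ : a = b, HEq f (fun u v : L a => u = v) := by
  induction hf with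
  | refl a => intro _; rfl
  | cons h hf _ =>
    intro he
    exact absurd ((chain_le hf).trans he.symm.le) h.lt.not_ge

lemma exists_cover (hfin : ∀ a b : S, (Set.Icc a b).Finite) {a b : S} (h : a < b) :
    ∃ e, a ⋖ e ∧ e ≤ b := by
  have hT : (Set.Ioc a b).Finite := (hfin a b).subset Set.Ioc_subset_Icc_self
  obtain ⟨e, heT, hminl⟩ : ∃ e ∈ Set.Ioc a b, ∀ c ∈ Set.Ioc a b, c ≤ e → e = c := by
    obtain ⟨e, he⟩ := hT.exists_minimal ⟨b, h, le_rfl⟩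
    exact ⟨e, he.1, fun c hc hce => le_antisymm (he.2 hc hce) hce⟩
  refine ⟨e, ⟨heT.1, fun c hac hce => ?_⟩, heT.2⟩
  have hcT : c ∈ Set.Ioc a b := ⟨hac, hce.le.trans heT.2⟩
  exact hce.ne' (hminl c hcT hce.le)

lemma icc_lt (hfin : ∀ a b : S, (Set.Icc a b).Finite) {a s B B' : S}
    (h1 : a < s) (h2 : B' ≤ B) (h3 : a ≤ B) :
    (Set.Icc s B').ncard < (Set.Icc a B).ncard := by
  apply Set.ncard_lt_ncard _ (hfin a B)
  constructor
  · intro x hx; exact ⟨h1.le.trans hx.1, hx.2.trans h2⟩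
  · intro hsub
    have : a ∈ Set.Icc s B' := hsub ⟨le_rfl, h3⟩
    exact absurd this.1 h1.not_ge

lemma exists_chain (hfin : ∀ a b : S, (Set.Icc a b).Finite) :
    ∀ n {a b : S}, (Set.Icc a b).ncard ≤ n → a ≤ b →
      ∃ f, ChainComp L Ω a b f := by
  intro n
  induction n with
  | zero =>
    intro a b hn hab
    have := (Set.ncard_pos (hfin a b)).mpr ⟨a, le_rfl, hab⟩
    omega
  | succ n ih =>
    intro a b hn hab
    rcases hab.eq_or_lt with rfl | hlt
    · exact ⟨_, ChainComp.refl a⟩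
    · obtain ⟨e, hcov, heb⟩ := exists_cover hfin hlt
      obtain ⟨f, hf⟩ := ih (a := e) (b := b)
        (by have := icc_lt hfin hcov.lt le_rfl hlt.le; omega) heb
      exact ⟨_, ChainComp.cons hcov hf⟩

lemma inf_covers {a s t : S} (hs : a ⋖ s) (ht : a ⋖ t) (hne : s ≠ t) : s ⊓ t = a := by
  rcases hs.eq_or_eq (le_inf hs.le ht.le) inf_le_left with h | h
  · exact h
  · have hst : s ≤ t := h ▸ inf_le_right
    rcases ht.eq_or_eq hs.le hst with h' | h'
    · exact absurd h' hs.lt.ne'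
    · exact absurd h' hne

lemma chain_unique (hfin : ∀ a b : S, (Set.Icc a b).Finite)
    (hPS6 : ∀ x y : S, ∀ (hx : x ⊓ y ⋖ x) (hy : x ⊓ y ⋖ y),
      ∃ (f : L x → L (x ⊔ y) → Prop) (g : L y → L (x ⊔ y) → Prop),
        ChainComp L Ω x (x ⊔ y) f ∧ ChainComp L Ω y (x ⊔ y) g ∧
        Relation.Comp (Ω (x ⊓ y) x hx) f = Relation.Comp (Ω (x ⊓ y) y hy) g) :
    ∀ n {a b : S} {f g : L a → L b → Prop}, (Set.Icc a b).ncard ≤ n →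
      ChainComp L Ω a b f → ChainComp L Ω a b g → f = g := by
  intro n
  induction n with
  | zero =>
    intro a b f g hn hf _
    have := (Set.ncard_pos (hfin a b)).mpr ⟨a, le_rfl, chain_le hf⟩
    omega
  | succ n ih =>
    intro a b f g hn hf hg
    cases hf with
    | refl => exact (eq_of_heq (chain_self hg rfl)).symm
    | cons hs hf' =>
      rename_i s f'
      cases hg with
      | refl => exact absurd ((chain_le hf').trans_lt hs.lt) (lt_irrefl _)
      | cons ht hg' =>
        rename_i t g'
        have hab : a ≤ b := hs.le.trans (chain_le hf')
        by_cases hst : s = t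
        · subst hst
          have hm : (Set.Icc s b).ncard ≤ n := by
            have := icc_lt hfin hs.lt le_rfl hab
            omega
          rw [ih hm hf' hg']
        · have hinf := inf_covers hs ht hst
          subst hinf
          obtain ⟨F, G, hF, hG, hFG⟩ := hPS6 s t hs ht
          have hsb := chain_le hf'
          have htb := chain_le hg'
          obtain ⟨K, hK⟩ := exists_chain (L := L) (Ω := Ω) hfin (Set.Icc (s ⊔ t) b).ncard le_rfl
            (sup_le hsb htb)
          have hsub : s ⊓ t ≤ b := le_trans inf_le_left hsb
          have hmS : (Set.Icc s b).ncard ≤ n := by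
            have := icc_lt hfin hs.lt le_rfl hsub
            omega
          have hmT : (Set.Icc t b).ncard ≤ n := by
            have := icc_lt hfin ht.lt le_rfl hsub
            omega
          have hf'' : f' = Relation.Comp F K := ih hmS hf' (chain_trans hF hK)
          have hg'' : g' = Relation.Comp G K := ih hmT hg' (chain_trans hG hK)
          rw [hf'', hg'', ← Relation.comp_assoc, ← Relation.comp_assoc, hFG]

variable (hfin : ∀ a b : S, (Set.Icc a b).Finite)
  (hPS3 : ∀ x y : S, ∀ h : x ⋖ y, IsPartialBij (Ω x y h) ∧ IsLatFilter (rdom (Ω x y h)) ∧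
    IsLatIdeal (rim (Ω x y h)) ∧ IsLatHomRel (Ω x y h))
  (hPS6 : ∀ x y : S, ∀ (hx : x ⊓ y ⋖ x) (hy : x ⊓ y ⋖ y),
      ∃ (f : L x → L (x ⊔ y) → Prop) (g : L y → L (x ⊔ y) → Prop),
        ChainComp L Ω x (x ⊔ y) f ∧ ChainComp L Ω y (x ⊔ y) g ∧
        Relation.Comp (Ω (x ⊓ y) x hx) f = Relation.Comp (Ω (x ⊓ y) y hy) g)
  (hPS7 : ∀ x y : S, ∀ (hx : x ⊓ y ⋖ x) (hy : x ⊓ y ⋖ y),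
      ∃ h : L (x ⊓ y) → L (x ⊔ y) → Prop, ChainComp L Ω (x ⊓ y) (x ⊔ y) h ∧
        rdom (Ω (x ⊓ y) x hx) ∩ rdom (Ω (x ⊓ y) y hy) ⊆ rdom h)
  (Φ : ∀ x y : S, x ≤ y → (L x → L y → Prop))
  (hΦ : ∀ x y : S, ∀ h : x ≤ y, ChainComp L Ω x y (Φ x y h))

include hfin hPS3 hPS6 hPS7 hΦ

lemma phi_eq {a b : S} {f : L a → L b → Prop} (hf : ChainComp L Ω a b f) (h : a ≤ b) :
    f = Φ a b h :=
  chain_unique hfin hPS6 (Set.Icc a b).ncard le_rfl hf (hΦ a b h)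

lemma phi_factor {a m b : S} (h1 : a ≤ m) (h2 : m ≤ b) (h : a ≤ b) :
    Φ a b h = Relation.Comp (Φ a m h1) (Φ m b h2) :=
  (phi_eq hfin hPS3 hPS6 hPS7 Φ hΦ (chain_trans (hΦ a m h1) (hΦ m b h2)) h).symm

lemma phi_cover {a b : S} (hc : a ⋖ b) (h : a ≤ b) : Φ a b h = Ω a b hc := by
  have h1 : ChainComp L Ω a b (Relation.Comp (Ω a b hc) (fun u v => u = v)) :=
    ChainComp.cons hc (ChainComp.refl b)
  rw [comp_eq_id_right] at h1
  exact (phi_eq hfin hPS3 hPS6 hPS7 Φ hΦ h1 h).symm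

lemma rdom_congr {a b b' : S} (e : b = b') (h : a ≤ b) (h' : a ≤ b') :
    rdom (Φ a b h) = rdom (Φ a b' h') := by subst e; rfl

lemma omega_fun {x y : S} {hc : x ⋖ y} {u : L x} {v w : L y}
    (h1 : Ω x y hc u v) (h2 : Ω x y hc u w) : v = w :=
  (hPS3 x y hc).1.1 u v w h1 h2

lemma omega_mono {x y : S} {hc : x ⋖ y} {u u' : L x} {w : L y}
    (h : Ω x y hc u w) (hu : u ≤ u') : ∃ w', w ≤ w' ∧ Ω x y hc u' w' := by
  obtain ⟨w₀, hw₀⟩ := (hPS3 x y hc).2.1.2.1 u ⟨w, h⟩ u' hu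
  have h2 := (hPS3 x y hc).2.2.2.1 u u' w w₀ h hw₀
  rw [sup_eq_right.mpr hu] at h2
  exact ⟨w ⊔ w₀, le_sup_left, h2⟩

lemma chain_mono {a b : S} {f : L a → L b → Prop} (hf : ChainComp L Ω a b f) :
    ∀ {u v u'}, f u v → u ≤ u' → ∃ v', v ≤ v' ∧ f u' v' := by
  induction hf with
  | refl a =>
    intro u v u' h hu
    exact ⟨u', h ▸ hu, rfl⟩
  | cons hc hcf ih =>
    intro u v u' h hu
    obtain ⟨m, hm1, hm2⟩ := h
    obtain ⟨m', hmm', hm1'⟩ := omega_mono hfin hPS3 hPS6 hPS7 Φ hΦ hm1 hu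
    obtain ⟨v', hv', h2'⟩ := ih hm2 hmm'
    exact ⟨v', hv', m', hm1', h2'⟩

lemma seven' :
    ∀ n, ∀ {a b c : S} (hab : a ≤ b) (hac : a ≤ c),
      (Set.Icc a (b ⊔ c)).ncard ≤ n → ∀ u, u ∈ rdom (Φ a b hab) → u ∈ rdom (Φ a c hac) →
      u ∈ rdom (Φ a (b ⊔ c) (hab.trans le_sup_left)) := by
  intro n
  induction n with
  | zero =>
    intro a b c hab hac hn u _ _
    have := (Set.ncard_pos (hfin a (b ⊔ c))).mpr ⟨a, le_rfl, hab.trans le_sup_left⟩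
    omega
  | succ n ih =>
    intro a b c hab hac hn u hub huc
    rcases hab.eq_or_lt with rfl | hb
    · rw [rdom_congr hfin hPS3 hPS6 hPS7 Φ hΦ (sup_eq_right.mpr hac) le_sup_left hac]
      exact huc
    rcases hac.eq_or_lt with rfl | hc
    · rw [rdom_congr hfin hPS3 hPS6 hPS7 Φ hΦ (sup_eq_left.mpr hab) le_sup_right hab]
      exact hub
    obtain ⟨e, he, heb⟩ := exists_cover hfin hb
    obtain ⟨d, hd, hdc⟩ := exists_cover hfin hc
    rw [phi_factor hfin hPS3 hPS6 hPS7 Φ hΦ he.le heb hab, phi_cover hfin hPS3 hPS6 hPS7 Φ hΦ he he.le] at hub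
    obtain ⟨v, hv, hvb⟩ := mem_rdom_comp.mp hub
    rw [phi_factor hfin hPS3 hPS6 hPS7 Φ hΦ hd.le hdc hac, phi_cover hfin hPS3 hPS6 hPS7 Φ hΦ hd hd.le] at huc
    obtain ⟨w, hw, hwc⟩ := mem_rdom_comp.mp huc
    by_cases hed : e = d
    · subst hed
      have hvw : v = w := omega_fun hfin hPS3 hPS6 hPS7 Φ hΦ hv hw
      subst hvw
      have hm : (Set.Icc e (b ⊔ c)).ncard ≤ n := by
        have := icc_lt (B := b ⊔ c) (B' := b ⊔ c) hfin he.lt le_rfl (hab.trans le_sup_left)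
        omega
      have hres := ih heb hdc hm v hvb hwc
      rw [phi_factor hfin hPS3 hPS6 hPS7 Φ hΦ he.le (heb.trans le_sup_left) (hab.trans le_sup_left),
          phi_cover hfin hPS3 hPS6 hPS7 Φ hΦ he he.le]
      exact mem_rdom_comp.mpr ⟨v, hv, hres⟩
    · have hinf := inf_covers he hd hed
      subst hinf
      obtain ⟨h7, hch7, hsub7⟩ := hPS7 e d he hd
      have hu7 : u ∈ rdom h7 := hsub7 ⟨⟨v, hv⟩, ⟨w, hw⟩⟩
      have h7eq : h7 = Φ (e ⊓ d) (e ⊔ d) (le_trans inf_le_left le_sup_left) :=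
        phi_eq hfin hPS3 hPS6 hPS7 Φ hΦ hch7 _
      rw [h7eq, phi_factor hfin hPS3 hPS6 hPS7 Φ hΦ inf_le_left le_sup_left _,
          phi_cover hfin hPS3 hPS6 hPS7 Φ hΦ he inf_le_left] at hu7
      obtain ⟨v₂, hv₂, hv₂dom⟩ := mem_rdom_comp.mp hu7
      have hvv : v₂ = v := omega_fun hfin hPS3 hPS6 hPS7 Φ hΦ hv₂ hv
      subst hvv
      have hbed : b ⊔ (e ⊔ d) = b ⊔ d := by rw [← sup_assoc, sup_eq_left.mpr heb]
      have hm1 : (Set.Icc e (b ⊔ (e ⊔ d))).ncard ≤ n := by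
        rw [hbed]
        have := icc_lt hfin he.lt (sup_le_sup_left hdc b) (hab.trans le_sup_left)
        omega
      have hres1 := ih heb le_sup_left hm1 v₂ hvb hv₂dom
      rw [rdom_congr hfin hPS3 hPS6 hPS7 Φ hΦ hbed (heb.trans le_sup_left) (heb.trans le_sup_left)] at hres1
      have hubd : u ∈ rdom (Φ (e ⊓ d) (b ⊔ d) (le_trans inf_le_left (heb.trans le_sup_left))) := by
        rw [phi_factor hfin hPS3 hPS6 hPS7 Φ hΦ inf_le_left (heb.trans le_sup_left) _,
            phi_cover hfin hPS3 hPS6 hPS7 Φ hΦ he inf_le_left]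
        exact mem_rdom_comp.mpr ⟨v₂, hv₂, hres1⟩
      rw [phi_factor hfin hPS3 hPS6 hPS7 Φ hΦ inf_le_right le_sup_right _,
          phi_cover hfin hPS3 hPS6 hPS7 Φ hΦ hd inf_le_right] at hubd
      obtain ⟨w₂, hw₂, hw₂dom⟩ := mem_rdom_comp.mp hubd
      have hww : w₂ = w := omega_fun hfin hPS3 hPS6 hPS7 Φ hΦ hw₂ hw
      subst hww
      have hbdc : (b ⊔ d) ⊔ c = b ⊔ c := by rw [sup_assoc, sup_eq_right.mpr hdc]
      have hm2 : (Set.Icc d ((b ⊔ d) ⊔ c)).ncard ≤ n := by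
        rw [hbdc]
        have := icc_lt (B := b ⊔ c) (B' := b ⊔ c) hfin hd.lt le_rfl (hab.trans le_sup_left)
        omega
      have hres2 := ih le_sup_right hdc hm2 w₂ hw₂dom hwc
      rw [rdom_congr hfin hPS3 hPS6 hPS7 Φ hΦ hbdc (le_sup_right.trans le_sup_left) (hdc.trans le_sup_right)] at hres2
      rw [phi_factor hfin hPS3 hPS6 hPS7 Φ hΦ inf_le_right (hdc.trans le_sup_right) _,
          phi_cover hfin hPS3 hPS6 hPS7 Φ hΦ hd inf_le_right]
      exact mem_rdom_comp.mpr ⟨w₂, hw₂, hres2⟩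

lemma joinlem :
    ∀ n, ∀ {a b c : S} (hab : a ≤ b) (hac : a ≤ c),
      (Set.Icc a (b ⊔ c)).ncard ≤ n → (rdom (Φ a b hab)).Nonempty →
      (rdom (Φ c (b ⊔ c) le_sup_right)).Nonempty := by
  intro n
  induction n with
  | zero =>
    intro a b c hab hac hn _
    have := (Set.ncard_pos (hfin a (b ⊔ c))).mpr ⟨a, le_rfl, hab.trans le_sup_left⟩
    omega
  | succ n ih =>
    intro a b c hab hac hn hne
    rcases hac.eq_or_lt with rfl | hc
    · rw [rdom_congr hfin hPS3 hPS6 hPS7 Φ hΦ (sup_eq_left.mpr hab) le_sup_right hab]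
      exact hne
    · obtain ⟨d, hd, hdc⟩ := exists_cover hfin hc
      obtain ⟨u, hu⟩ := hne
      obtain ⟨v, hvdom⟩ := (hPS3 a d hd).2.1.1
      have htb : u ⊔ v ∈ rdom (Φ a b hab) := by
        obtain ⟨w, hw⟩ := hu
        obtain ⟨w', _, hw'⟩ := chain_mono hfin hPS3 hPS6 hPS7 Φ hΦ (hΦ a b hab) hw le_sup_left
        exact ⟨w', hw'⟩
      have htd : u ⊔ v ∈ rdom (Φ a d hd.le) := by
        rw [phi_cover hfin hPS3 hPS6 hPS7 Φ hΦ hd hd.le]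
        exact (hPS3 a d hd).2.1.2.1 v hvdom _ le_sup_right
      have h7 := seven' hfin hPS3 hPS6 hPS7 Φ hΦ (Set.Icc a (b ⊔ d)).ncard hab hd.le le_rfl
        (u ⊔ v) htb htd
      rw [phi_factor hfin hPS3 hPS6 hPS7 Φ hΦ hd.le le_sup_right (hab.trans le_sup_left),
          phi_cover hfin hPS3 hPS6 hPS7 Φ hΦ hd hd.le] at h7
      obtain ⟨w, hwrel, hwdom⟩ := mem_rdom_comp.mp h7
      have hbdc : (b ⊔ d) ⊔ c = b ⊔ c := by rw [sup_assoc, sup_eq_right.mpr hdc]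
      have hm : (Set.Icc d ((b ⊔ d) ⊔ c)).ncard ≤ n := by
        rw [hbdc]
        have := icc_lt (B := b ⊔ c) (B' := b ⊔ c) hfin hd.lt le_rfl (hab.trans le_sup_left)
        omega
      have hres := ih le_sup_right hdc hm ⟨w, hwdom⟩
      rw [rdom_congr hfin hPS3 hPS6 hPS7 Φ hΦ hbdc le_sup_right le_sup_right] at hres
      exact hres

end PolytoneAux

theorem xi_join_one {S : Type u} [Lattice S] (L : S → Type v)
    [∀ x, Lattice (L x)] [∀ x, BoundedOrder (L x)]
    (Ω : ∀ x y : S, x ⋖ y → L x → L y → Prop)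
    (hmin : MinimalAxioms L Ω)
    (Φ : ∀ x y : S, x ≤ y → (L x → L y → Prop))
    (hΦ : ∀ x y : S, ∀ h : x ≤ y, ChainComp L Ω x y (Φ x y h)) :
    ∀ x x' y : S, xiRel Φ x x' → x ≤ y → xiRel Φ (x ⊔ y) (x' ⊔ y) := by 
  obtain ⟨hfin, -, -, -, -, -, hPS3, hPS6, hPS7, -⟩ := hmin
  intro x x' y hxi hxy
  obtain ⟨hxx', u, v, huv⟩ := hxi
  have h1 : (rdom (Φ x x' hxx')).Nonempty := ⟨u, v, huv⟩
  have h2 := joinlem hfin hPS3 hPS6 hPS7 Φ hΦ (Set.Icc x (x' ⊔ y)).ncard hxx' hxy le_rfl h1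
  rw [show x ⊔ y = y from sup_eq_right.mpr hxy]
  obtain ⟨u', v', h'⟩ := h2
  exact ⟨le_sup_right, u', v', h'⟩
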